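/- Suppose O_i and O_k are d-separated given W ∪ S where W ⊆ O \ {O_i, O_k}, every proper subset V ⊂ W containing R = {O_j} ∪ Sep(O_i,O_k) d-connects O_i and O_k given V ∪ S, every member of Sep(O_i,O_k) is an ancestor of {O_i, O_k} ∪ S, O_l ∈ W, and O_l is not an ancestor of {O_i} ∪ S nor of {O_k} ∪ S. Then O_l is an ancestor of O_j. -/

import Mathlib

open List

variable {V : Type*}

/-- Ancestor relation: directed path or equality. -/
def Anc (E : V → V → Prop) : V → V → Prop := Relation.ReflTransGen E

/-- `x` is an ancestor of some member of the set `T`. -/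
def AncSet (E : V → V → Prop) (T : Set V) (x : V) : Prop := ∃ y ∈ T, Anc E x y

/-- Undirected adjacency underlying a directed graph. -/
def Adjacent (E : V → V → Prop) (x y : V) : Prop := E x y ∨ E y x

/-- An (undirected) path in the directed graph: consecutive vertices adjacent, no repeats. -/
def IsTrail (E : V → V → Prop) (l : List V) : Prop := l.Chain' (Adjacent E) ∧ l.Nodup

/-- `b` is a collider between `a` and `c`: both edges point into `b`. -/
def ColliderTriple (E : V → V → Prop) (a b c : V) : Prop := E a b ∧ E c b

/-- A path from `x` to `y` that is active (d-connecting) given the conditioning set `C`. -/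
def ActivePath (E : V → V → Prop) (C : Set V) (l : List V) (x y : V) : Prop :=
  IsTrail E l ∧ l.head? = some x ∧ l.getLast? = some y ∧
  (∀ a b c, [a, b, c] <:+: l → ColliderTriple E a b c → ∃ d ∈ C, Anc E b d) ∧
  (∀ a b c, [a, b, c] <:+: l → ¬ ColliderTriple E a b c → b ∉ C)

/-- d-connection given a conditioning set. -/
def DConn (E : V → V → Prop) (C : Set V) (x y : V) : Prop := ∃ l, ActivePath E C l x y

/-- d-separation given a conditioning set. -/
def DSep (E : V → V → Prop) (C : Set V) (x y : V) : Prop := ¬ DConn E C x y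

/-- An inducing path between `x` and `y` relative to latent set `L` and selection set `S`. -/
def InducingPath (E : V → V → Prop) (L S : Set V) (l : List V) (x y : V) : Prop :=
  IsTrail E l ∧ l.head? = some x ∧ l.getLast? = some y ∧
  (∀ a b c, [a, b, c] <:+: l → ColliderTriple E a b c → AncSet E ({x, y} ∪ S) b) ∧
  (∀ a b c, [a, b, c] <:+: l → ¬ ColliderTriple E a b c → b ∈ L)

def HasInducingPath (E : V → V → Prop) (L S : Set V) (x y : V) : Prop :=
  ∃ l, InducingPath E L S l x y

/-- The path ends with an arrowhead at its last vertex (is "into" its last vertex). -/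
def IntoLast (E : V → V → Prop) (l : List V) : Prop := ∃ p a b, l = p ++ [a, b] ∧ E a b

/-- The path is into its first vertex. -/
def IntoHead (E : V → V → Prop) (l : List V) : Prop := ∃ a b t, l = a :: b :: t ∧ E b a

/-- The path is out of its first vertex. -/
def OutHead (E : V → V → Prop) (l : List V) : Prop := ∃ a b t, l = a :: b :: t ∧ E a b

/-- The path is out of its last vertex. -/
def OutLast (E : V → V → Prop) (l : List V) : Prop := ∃ p a b, l = p ++ [a, b] ∧ E b a

/-- Membership in D-SEP(x,y). -/
def InDSEP (E : V → V → Prop) (O L S : Set V) (x y k : V) : Prop :=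
  ∃ σ : List V, σ.head? = some x ∧ σ.getLast? = some k ∧ σ.Nodup ∧
    (∀ v ∈ σ, v ∈ O ∧ AncSet E ({x, y} ∪ S) v) ∧
    σ.Chain' (HasInducingPath E L S) ∧
    (∀ a b c, [a, b, c] <:+: σ →
      (∃ l, InducingPath E L S l a b ∧ IntoLast E l) ∧
      (∃ l, InducingPath E L S l c b ∧ IntoLast E l))

/-- A mixed graph: symmetric adjacency together with arrowhead marks.
`arrow x y` means the edge between `x` and `y` has an arrowhead at `y`. -/
structure Mixed (V : Type*) where
  adj : V → V → Prop
  arrow : V → V → Prop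

/-- v-structure `a *→ b ←* c` with `a, c` non-adjacent. -/
def VStruct (H : Mixed V) (a b c : V) : Prop :=
  H.adj a b ∧ H.adj b c ∧ ¬ H.adj a c ∧ H.arrow a b ∧ H.arrow c b

def TriangleIn (H : Mixed V) (a b c : V) : Prop := H.adj a b ∧ H.adj b c ∧ H.adj a c

/-- Membership in PD-SEP(x) of a mixed graph. -/
def InPDSEP (H : Mixed V) (x k : V) : Prop :=
  ∃ pa : List V, pa.head? = some x ∧ pa.getLast? = some k ∧ pa.Nodup ∧ pa.Chain' H.adj ∧
    ∀ a b c, [a, b, c] <:+: pa → VStruct H a b c ∨ TriangleIn H a b c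

/-- The MAAG of a directed graph with latent set `L` and selection set `S`:
adjacency iff an inducing path exists, arrowhead at `y` iff `y ∉ Anc({x} ∪ S)`. -/
def MAAG (E : V → V → Prop) (L S : Set V) : Mixed V where
  adj := fun x y => x ≠ y ∧ HasInducingPath E L S x y
  arrow := fun x y => (x ≠ y ∧ HasInducingPath E L S x y) ∧ ¬ AncSet E (insert x S) y

/-- Undirected (tail-tail) edge of the MAAG. -/
def UndirMAAG (E : V → V → Prop) (L S : Set V) (a b : V) : Prop :=
  (a ≠ b ∧ HasInducingPath E L S a b) ∧ AncSet E (insert b S) a ∧ AncSet E (insert a S) b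

/-- Every edge of the path incident to `v` is into `v`. -/
def EdgesIntoAt (E : V → V → Prop) (l : List V) (v : V) : Prop :=
  ∀ a b, [a, b] <:+: l → (a = v → E b v) ∧ (b = v → E a v)

/-- Every edge of the path incident to `v` is out of `v`. -/
def EdgesOutAt (E : V → V → Prop) (l : List V) (v : V) : Prop :=
  ∀ a b, [a, b] <:+: l → (a = v → E v b) ∧ (b = v → E v a)

/-
The set `A` of ancestors of `{i, j, k} ∪ S` is ancestrally closed, so every non-collider of a
path that is active given `(W ∩ A) ∪ S` and lies in `W` already lies in `W ∩ A`: the smaller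
set `W ∩ A` still d-separates `i` and `k`. It contains `R`, because the members of `Sep` are
ancestors of `{i, k} ∪ S`, so minimality of `W` forces `W ⊆ A`. Hence `l` is an ancestor of
`i`, `j`, `k` or `S`, and only `j` is left.
-/

namespace AncSet

variable {E : V → V → Prop} {T T' : Set V} {x y : V}

lemma of_mem (hx : x ∈ T) : AncSet E T x := ⟨x, hx, Relation.ReflTransGen.refl⟩

lemma mono (hTT' : T ⊆ T') : AncSet E T x → AncSet E T' x
  | ⟨z, hz, hxz⟩ => ⟨z, hTT' hz, hxz⟩

lemma of_anc (hxy : Anc E x y) : AncSet E T y → AncSet E T x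
  | ⟨z, hz, hyz⟩ => ⟨z, hz, Relation.ReflTransGen.trans hxy hyz⟩

end AncSet

lemma List.eq_head_or_eq_getLast_or_infix_three {α : Type*} {l : List α} {x y v : α}
    (hx : l.head? = some x) (hy : l.getLast? = some y) (hv : v ∈ l) :
    v = x ∨ v = y ∨ ∃ a c, [a, v, c] <:+: l := by
  obtain ⟨p, q, rfl⟩ := List.append_of_mem hv
  rcases List.eq_nil_or_concat p with rfl | ⟨p', a, rfl⟩
  · simp_all
  rcases q with _ | ⟨c, q'⟩
  · simp_all
  exact Or.inr (Or.inr ⟨a, c, p', q', by simp⟩)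

namespace ActivePath

variable {E : V → V → Prop} {C : Set V} {l : List V} {x y : V}

lemma reverse (h : ActivePath E C l x y) : ActivePath E C l.reverse y x := by
  obtain ⟨⟨hch, hnd⟩, hx, hy, hcol, hncol⟩ := h
  have hrev : ∀ a b c, [a, b, c] <:+: l.reverse → [c, b, a] <:+: l := fun a b c h => by
    simpa using List.reverse_infix.mpr h
  refine ⟨⟨List.isChain_reverse.mpr (hch.imp fun _ _ hab => hab.symm),
    List.nodup_reverse.mpr hnd⟩,
    by rwa [List.head?_reverse], by rwa [List.getLast?_reverse], ?_, ?_⟩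
  · exact fun a b c hin ⟨hab, hcb⟩ => hcol c b a (hrev a b c hin) ⟨hcb, hab⟩
  · exact fun a b c hin hnc => hncol c b a (hrev a b c hin) fun ⟨hcb, hab⟩ => hnc ⟨hab, hcb⟩

/-- Following the path from an edge `v → w`, the first arrowhead met is either the endpoint `y`
or a collider, which is an ancestor of `C`. -/
lemma ancSet_of_suffix (h : ActivePath E C l x y) :
    ∀ (t : List V) (v w : V), v :: w :: t <:+ l → E v w → AncSet E (insert y C) v := by
  intro t
  induction t with
  | nil =>
    intro v w hsuf hvw
    obtain ⟨s, rfl⟩ := hsuf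
    have hw : w = y := by simpa using h.2.2.1
    exact AncSet.of_anc (Relation.ReflTransGen.single hvw) (AncSet.of_mem (hw ▸ Set.mem_insert _ _))
  | cons u t ih =>
    intro v w hsuf hvw
    have hsuf' : w :: u :: t <:+ l := (List.suffix_cons v _).trans hsuf
    have hwu : Adjacent E w u := (List.isChain_cons_cons.mp (h.1.1.suffix hsuf')).1
    refine AncSet.of_anc (Relation.ReflTransGen.single hvw) ?_
    rcases hwu with hwu | huw
    · exact ih w u hsuf' hwu
    · obtain ⟨d, hd, hwd⟩ := h.2.2.2.1 v w u (List.infix_iff_prefix_suffix.mpr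
        ⟨_, List.prefix_append _ _, hsuf⟩) ⟨hvw, huw⟩
      exact ⟨d, Set.mem_insert_of_mem _ hd, hwd⟩

lemma ancSet_of_infix (h : ActivePath E C l x y) {v w : V} (hin : [v, w] <:+: l)
    (hvw : E v w) : AncSet E (insert y C) v := by
  obtain ⟨s, r, rfl⟩ := hin
  exact h.ancSet_of_suffix r v w ⟨s, by simp⟩ hvw

lemma ancSet_of_mem (h : ActivePath E C l x y) {v : V} (hv : v ∈ l) :
    AncSet E ({x, y} ∪ C) v := by
  rcases List.eq_head_or_eq_getLast_or_infix_three h.2.1 h.2.2.1 hv with rfl | rfl | ⟨a, c, hin⟩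
  · exact AncSet.of_mem (by simp)
  · exact AncSet.of_mem (by simp)
  by_cases hcol : ColliderTriple E a v c
  · obtain ⟨d, hd, hvd⟩ := h.2.2.2.1 a v c hin hcol
    exact ⟨d, Or.inr hd, hvd⟩
  obtain ⟨hav, hvc⟩ : Adjacent E a v ∧ Adjacent E v c := by simpa using h.1.1.infix hin
  rcases hvc with hvc | hcv
  · have hin' : [v, c] <:+: l := List.IsInfix.trans ⟨[a], [], rfl⟩ hin
    exact (h.ancSet_of_infix hin' hvc).mono (Set.insert_subset (by simp) Set.subset_union_right)
  rcases hav with hav | hva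
  · exact absurd ⟨hav, hcv⟩ hcol
  · have hin' : [v, a] <:+: l.reverse :=
      List.IsInfix.trans ⟨[c], [], rfl⟩ (by simpa using List.reverse_infix.mpr hin)
    exact (h.reverse.ancSet_of_infix hin' hva).mono
      (Set.insert_subset (by simp) Set.subset_union_right)

end ActivePath

lemma DConn.of_subset_of_ancSet {E : V → V → Prop} {C D : Set V} {x y : V} (hDC : D ⊆ C)
    (hC : ∀ b ∈ C, AncSet E ({x, y} ∪ D) b → b ∈ D) (h : DConn E D x y) : DConn E C x y := by
  obtain ⟨l, hl⟩ := h
  refine ⟨l, hl.1, hl.2.1, hl.2.2.1, fun a b c hin hcol => ?_, fun a b c hin hncol hbC => ?_⟩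
  · obtain ⟨d, hd, hbd⟩ := hl.2.2.2.1 a b c hin hcol
    exact ⟨d, hDC hd, hbd⟩
  · exact hl.2.2.2.2 a b c hin hncol (hC b hbC (hl.ancSet_of_mem (hin.subset (by simp))))

lemma ancSet_of_mem_minimal_dSep {E : V → V → Prop} {S W R T : Set V} {x y : V}
    (hxT : x ∈ T) (hyT : y ∈ T) (hST : S ⊆ T) (hRW : R ⊆ W) (hRT : ∀ r ∈ R, AncSet E T r)
    (hmin : ∀ V' : Set V, V' ⊂ W → R ⊆ V' → DConn E (V' ∪ S) x y)
    (hsep : DSep E (W ∪ S) x y) : ∀ w ∈ W, AncSet E T w := by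
  by_contra! ⟨w, hwW, hwT⟩
  set W' := W ∩ {v | AncSet E T v}
  have hW'W : W' ⊂ W := ⟨Set.inter_subset_left, fun h => hwT (h hwW).2⟩
  refine hsep (DConn.of_subset_of_ancSet (Set.union_subset_union_left _ Set.inter_subset_left)
    ?_ (hmin W' hW'W fun r hr => ⟨hRW hr, hRT r hr⟩))
  rintro b (hbW | hbS) ⟨d, hd, hbd⟩
  · refine Or.inl ⟨hbW, AncSet.of_anc hbd ?_⟩
    rcases hd with (rfl | rfl) | ⟨-, hd⟩ | hd
    exacts [AncSet.of_mem hxT, AncSet.of_mem hyT, hd, AncSet.of_mem (hST hd)]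
  · exact Or.inr hbS

theorem stmt11_general (E : V → V → Prop) (S : Set V)
    (i j k l : V) (W Sep : Set V)
    (hSepAnc : ∀ v ∈ Sep, AncSet E ({i, k} ∪ S) v)
    (hRW : insert j Sep ⊆ W)
    (hmin : ∀ V' : Set V, V' ⊂ W → insert j Sep ⊆ V' → DConn E (V' ∪ S) i k)
    (hsep : DSep E (W ∪ S) i k)
    (hl : l ∈ W)
    (hla : ¬ AncSet E (insert i S) l) (hlb : ¬ AncSet E (insert k S) l) :
    Anc E l j := by
  have hRT : ∀ r ∈ insert j Sep, AncSet E (insert j ({i, k} ∪ S)) r := by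
    rintro r (rfl | hr)
    · exact AncSet.of_mem (Set.mem_insert _ _)
    · exact (hSepAnc r hr).mono (Set.subset_insert _ _)
  obtain ⟨d, hd, hld⟩ := ancSet_of_mem_minimal_dSep (by simp) (by simp)
    (Set.subset_union_right.trans (Set.subset_insert _ _)) hRW hRT hmin hsep l hl
  rcases hd with rfl | (rfl | rfl) | hd
  · exact hld
  · exact (hla ⟨d, Set.mem_insert _ _, hld⟩).elim
  · exact (hlb ⟨d, Set.mem_insert _ _, hld⟩).elim
  · exact (hla ⟨d, Set.mem_insert_of_mem _ hd, hld⟩).elim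

/-- second part of the lemma on orienting with non-minimal d-separating sets.
With `R = {j} ∪ Sep(i,k) ⊆ W`, minimality of `W` relative to `R`, all members of `Sep(i,k)`
ancestors of `{i,k} ∪ S`, `l ∈ W`, and `l` not an ancestor of `i ∪ S` nor of `k ∪ S`,
it follows that `l` is an ancestor of `j`. -/
theorem stmt11 (E : V → V → Prop) (O L S : Set V)
    (hOL : Disjoint O L) (hOS : Disjoint O S) (hLS : Disjoint L S)
    (hcover : ∀ v : V, v ∈ O ∨ v ∈ L ∨ v ∈ S)
    (i j k l : V) (W Sep : Set V)
    (hSepO : Sep ⊆ O \ {i, k})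
    (hSepAnc : ∀ v ∈ Sep, AncSet E ({i, k} ∪ S) v)
    (hW : W ⊆ O \ {i, k}) (hRW : insert j Sep ⊆ W)
    (hmin : ∀ V' : Set V, V' ⊂ W → insert j Sep ⊆ V' → DConn E (V' ∪ S) i k)
    (hsep : DSep E (W ∪ S) i k)
    (hl : l ∈ W)
    (hla : ¬ AncSet E (insert i S) l) (hlb : ¬ AncSet E (insert k S) l) :
    Anc E l j :=
  stmt11_general E S i j k l W Sep hSepAnc hRW hmin hsep hl hla hlb
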